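/- Let A be a finite nonempty alphabet, E ⊆ W(A), and 𝐬 an infinite sequence of variable words over A such that E is large in 𝐬. Then there exists an infinite extracted subsequence (w_n(x))_{n=0}^∞ of 𝐬 such that, setting F_n = ⟨(w_i(x))_{i=0}^n⟩_c for each n ∈ ℕ, the set E ∩ E_{F_n} is large in (w_i(x))_{i=n+1}^∞ for all n ∈ ℕ. -/

import Mathlib

/- Words over an alphabet are `List α`.  The variable symbol `x` is modelled by
`none : Option α`, and variable words are lists over `Option α` containing `none`. -/

namespace HJ

variable {α : Type*}

/-- Substitution of the letter `a` for every occurrence of the variable in a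
variable word, producing a constant word. -/
def substC (s : List (Option α)) (a : α) : List α :=
  s.map (fun b => b.getD a)

/-- Substitution of `b ∈ A ∪ {x}` (a letter `some a` or the variable `none`)
for every occurrence of the variable. -/
def substV (s : List (Option α)) (b : Option α) : List (Option α) :=
  s.map (fun c => Option.elim c b some)

/-- `s` is a variable word over the alphabet `S`: all its letters lie in `S`
and it contains at least one occurrence of the variable. -/
def IsVarWord (S : Set α) (s : List (Option α)) : Prop :=
  (∀ a : α, some a ∈ s → a ∈ S) ∧ none ∈ s

/-- `W(S)`: the set of (constant) words over the alphabet `S`. -/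
def WordsOver (S : Set α) : Set (List α) :=
  { w | ∀ a ∈ w, a ∈ S }

/-- The constant span of the sequence `s` of variable words, with indices
restricted to `I` and the letter substituted at position `l i` taken from the
alphabet `B (l i)`: all concatenations `s_{l_0}(a_0) ⋯ s_{l_n}(a_n)` with
`l_0 < ⋯ < l_n` in `I` and `a_i ∈ B (l_i)`. -/
def constSpan (B : ℕ → Set α) (s : ℕ → List (Option α)) (I : Set ℕ) :
    Set (List α) :=
  { w | ∃ (n : ℕ) (l : Fin (n + 1) → ℕ) (a : Fin (n + 1) → α),
      StrictMono l ∧ (∀ i, l i ∈ I) ∧ (∀ i, a i ∈ B (l i)) ∧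
      w = (List.ofFn fun i => substC (s (l i)) (a i)).flatten }

/-- The variable span of the sequence `s` of variable words, with indices
restricted to `I` and alphabets given by `B`: all concatenations
`s_{l_0}(b_0) ⋯ s_{l_n}(b_n)` with `l_0 < ⋯ < l_n` in `I` and
`b_i ∈ B (l_i) ∪ {x}` which contain at least one occurrence of the variable. -/
def varSpan (B : ℕ → Set α) (s : ℕ → List (Option α)) (I : Set ℕ) :
    Set (List (Option α)) :=
  { w | ∃ (n : ℕ) (l : Fin (n + 1) → ℕ) (b : Fin (n + 1) → Option α),
      StrictMono l ∧ (∀ i, l i ∈ I) ∧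
      (∀ i, ∀ a : α, b i = some a → a ∈ B (l i)) ∧
      none ∈ w ∧
      w = (List.ofFn fun i => substV (s (l i)) (b i)).flatten }

/-- `(t_0, …, t_l)` is a finite extracted subsequence of `s` (with alphabets `B`):
there are `0 = m_0 < m_1 < ⋯` with `t_i` in the variable span of
`(s_n)_{n = m_i}^{m_{i+1} - 1}` (with alphabets `B`) for all `i ≤ l`. -/
def ExtractedFin (B : ℕ → Set α) (s t : ℕ → List (Option α)) (l : ℕ) : Prop :=
  ∃ m : ℕ → ℕ, m 0 = 0 ∧ StrictMono m ∧
    ∀ i ≤ l, t i ∈ varSpan B s (Set.Ico (m i) (m (i + 1)))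

/-- `t` is an infinite extracted subsequence of `s` (with alphabets `B`). -/
def Extracted (B : ℕ → Set α) (s t : ℕ → List (Option α)) : Prop :=
  ∀ l : ℕ, ExtractedFin B s t l

/-- `E` is large in `s` (with alphabets `B`): `E` meets the constant span of
every infinite extracted subsequence of `s`. -/
def IsLarge (B : ℕ → Set α) (E : Set (List α)) (s : ℕ → List (Option α)) : Prop :=
  ∀ w : ℕ → List (Option α), Extracted B s w →
    (E ∩ constSpan B w Set.univ).Nonempty

/-- `E_F = {z ∈ W(S) : w ++ z ∈ E for every w ∈ F}`. -/
def wordQuot (S : Set α) (E F : Set (List α)) : Set (List α) :=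
  { z | z ∈ WordsOver S ∧ ∀ w ∈ F, w ++ z ∈ E }

end HJ

/-!
Carlson's theorem, proved with idempotent ultrafilters. Under concatenation, the ultrafilters on
words form a compact semigroup in which right multiplications are continuous. Let `p` be a
minimal idempotent among the ultrafilters living on the constant words of every tail span of `s`.
An idempotent below the constant family `(p)_a` in the ideal `{(σ_a W)_a : W on variable words}`
of the product semigroup gives a `W` with `σ_a W = p` for every letter `a`, by minimality of `p`
(`σ_a` substitutes `a` for the variable). A Galvin–Glazer recursion along `W` then extracts `w`
whose whole constant span lies in any given member of `p`. Since `E` is large, its complement is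
not in `p`, so `⟨w⟩_c ⊆ E`. Finally, if `z` is a constant word of an extracted subsequence of
`(w_i)_{i>n}`, then `z` and `f z` for `f ∈ F_n` all lie in `⟨w⟩_c ⊆ E`.
-/

section IdempotentsInCompactSemigroups

variable {M : Type*} [Semigroup M] [TopologicalSpace M] [CompactSpace M]

theorem exists_minimal_closed_leftIdeal {S : Set M} (hne : S.Nonempty) (hcl : IsClosed S)
    (hmul : ∀ x ∈ S, ∀ y ∈ S, x * y ∈ S) :
    ∃ L, Minimal (fun L : Set M =>
      L.Nonempty ∧ IsClosed L ∧ L ⊆ S ∧ ∀ x ∈ S, ∀ y ∈ L, x * y ∈ L) L := by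
  obtain ⟨L, -, hL⟩ := zorn_superset_nonempty
    {L | L.Nonempty ∧ IsClosed L ∧ L ⊆ S ∧ ∀ x ∈ S, ∀ y ∈ L, x * y ∈ L}
    (fun c hc hchain hcne => ⟨⋂₀ c,
      ⟨@IsCompact.nonempty_sInter_of_directed_nonempty_isCompact_isClosed _ _ _
          hcne.to_subtype (IsChain.directedOn (r := fun a b : Set M => a ⊇ b) hchain.symm)
          (fun L hL => (hc hL).1) (fun L hL => (hc hL).2.1.isCompact) (fun L hL => (hc hL).2.1),
        isClosed_sInter fun L hL => (hc hL).2.1,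
        (Set.sInter_subset_of_mem hcne.some_mem).trans (hc hcne.some_mem).2.2.1,
        fun x hx y hy => Set.mem_sInter.2 fun L hL => (hc hL).2.2.2 x hx y (hy L hL)⟩,
      fun L hL => Set.sInter_subset_of_mem hL⟩)
    S ⟨hne, hcl, subset_rfl, hmul⟩
  exact ⟨L, hL⟩

variable [T2Space M]

theorem exists_minimal_idempotent (hM : ∀ r : M, Continuous (· * r)) {S : Set M}
    (hne : S.Nonempty) (hcl : IsClosed S) (hmul : ∀ x ∈ S, ∀ y ∈ S, x * y ∈ S) :
    ∃ p ∈ S, IsIdempotentElem p ∧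
      ∀ r ∈ S, IsIdempotentElem r → r * p = r → p * r = r → r = p := by
  -- `p` is any idempotent of a minimal closed left ideal `L` of `S`.
  obtain ⟨L, hLmin⟩ := exists_minimal_closed_leftIdeal hne hcl hmul
  obtain ⟨hLne, hLcl, hLS, hLideal⟩ := hLmin.prop
  obtain ⟨p, hpL, hpp⟩ := exists_idempotent_in_compact_subsemigroup hM L hLne hLcl.isCompact
    fun x hx y hy => hLideal x (hLS hx) y hy
  refine ⟨p, hLS hpL, hpp, fun r hrS hrr hrp hpr => ?_⟩
  have hrL : r ∈ L := hrp ▸ hLideal r hrS p hpL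
  have hSr : (· * r) '' S = L := by
    refine hLmin.eq_of_subset ⟨⟨r * r, r, hrS, rfl⟩, (hcl.isCompact.image (hM r)).isClosed,
      ?_, ?_⟩ ?_
    · rintro _ ⟨a, ha, rfl⟩
      exact hmul a ha r hrS
    · rintro x hx _ ⟨a, ha, rfl⟩
      exact ⟨x * a, hmul x hx a ha, mul_assoc _ _ _⟩
    · rintro _ ⟨a, ha, rfl⟩
      exact hLideal a ha r hrL
  obtain ⟨z, -, hzp⟩ : p ∈ (· * r) '' S := hSr ▸ hpL
  have hpr' : p * r = p := by rw [← hzp, mul_assoc, hrr.eq]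
  rw [← hpr, hpr']

theorem exists_idempotent_mem_ideal (hM : ∀ r : M, Continuous (· * r)) {S T : Set M}
    (hScl : IsClosed S) (hmul : ∀ x ∈ S, ∀ y ∈ S, x * y ∈ S)
    (hTne : T.Nonempty) (hTcl : IsClosed T) (hTS : T ⊆ S)
    (hTl : ∀ x ∈ S, ∀ y ∈ T, x * y ∈ T) (hTr : ∀ x ∈ S, ∀ y ∈ T, y * x ∈ T)
    {p : M} (hpS : p ∈ S) (hp : IsIdempotentElem p) :
    ∃ q ∈ T, IsIdempotentElem q ∧ q * p = q ∧ p * q = q := by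
  -- An idempotent `u` of `S p ∩ T` satisfies `u p = u`; then `q = p u` works.
  obtain ⟨u, ⟨⟨z, -, rfl⟩, huT⟩, huu⟩ := exists_idempotent_in_compact_subsemigroup hM
    ((· * p) '' S ∩ T)
    (hTne.elim fun t ht => ⟨t * p, ⟨t, hTS ht, rfl⟩, hTr p hpS t ht⟩)
    ((hScl.isCompact.image (hM p)).inter_right hTcl)
    (by
      rintro _ ⟨⟨a, ha, rfl⟩, hxT⟩ _ ⟨⟨b, hb, rfl⟩, hyT⟩
      exact ⟨⟨a * p * b, hmul _ (hmul a ha p hpS) b hb, mul_assoc _ _ _⟩,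
        hTl _ (hTS hxT) _ hyT⟩)
  have hup : z * p * p = z * p := by rw [mul_assoc, hp.eq]
  refine ⟨p * (z * p), hTl p hpS _ huT, ?_, ?_, ?_⟩
  · calc p * (z * p) * (p * (z * p)) = p * ((z * p * p) * (z * p)) := by
          simp only [mul_assoc]
      _ = p * (z * p) := by rw [hup]; exact congrArg (p * ·) huu
  · rw [mul_assoc, hup]
  · rw [← mul_assoc, hp.eq]

end IdempotentsInCompactSemigroups

attribute [local instance] Ultrafilter.mul Ultrafilter.semigroup

namespace Ultrafilter

theorem mem_mul_iff {M : Type*} [Mul M] {U V : Ultrafilter M} {X : Set M} :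
    X ∈ U * V ↔ {u | {v | u * v ∈ X} ∈ V} ∈ U :=
  Iff.rfl

theorem map_mul_of_map_mul {M N : Type*} [Mul M] [Mul N] {f : M → N}
    (hf : ∀ x y, f (x * y) = f x * f y) (U V : Ultrafilter M) :
    map f (U * V) = map f U * map f V :=
  Ultrafilter.ext fun X => by
    simp only [mem_map, mem_mul_iff, Set.preimage_ofPred_eq, Set.mem_preimage, hf]

theorem continuous_map {X Y : Type*} (f : X → Y) : Continuous (map f) :=
  ultrafilterBasis_is_basis.continuous_iff.2 <| Set.forall_mem_range.2 fun s => by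
    simpa only [Set.preimage_ofPred_eq, mem_map] using ultrafilter_isOpen_basic (f ⁻¹' s)

theorem isClosed_setOf_forall_mem {M ι : Type*} (X : ι → Set M) :
    IsClosed {q : Ultrafilter M | ∀ i, X i ∈ q} := by
  simpa only [Set.ofPred_forall] using isClosed_iInter fun i => ultrafilter_isClosed_basic (X i)

theorem exists_forall_mem_of_antitone {M : Type*} {X : ℕ → Set M} (hX : Antitone X)
    (hne : ∀ n, (X n).Nonempty) : ∃ q : Ultrafilter M, ∀ n, X n ∈ q := by
  have : (⨅ n, Filter.principal (X n)).NeBot :=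
    Filter.iInf_neBot_of_directed' (Filter.monotone_principal.comp_antitone hX).directed_ge
      fun n => Filter.principal_neBot_iff.2 (hne n)
  exact ⟨of _, fun n => of_le _ (Filter.mem_iInf_of_mem n (Filter.mem_principal_self _))⟩

theorem forall_mem_mul {M : Type*} [Mul M] {U V : Ultrafilter M} {X Y Z : ℕ → Set M}
    (hU : ∀ n, X n ∈ U) (hV : ∀ n, Y n ∈ V)
    (h : ∀ n, ∀ u ∈ X n, ∃ j, ∀ v ∈ Y j, u * v ∈ Z n) :
    ∀ n, Z n ∈ U * V := fun n =>
  mem_mul_iff.2 <| Filter.mem_of_superset (hU n) fun u hu =>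
    (h n u hu).elim fun j hj => Filter.mem_of_superset (hV j) (hj · ·)

end Ultrafilter

theorem exists_seq_of_forall_exists {X : Type*} {R : X → X → Prop} (h : ∀ x, ∃ y, R x y)
    (x₀ : X) : ∃ f : ℕ → X, f 0 = x₀ ∧ ∀ n, R (f n) (f (n + 1)) := by
  choose g hg using h
  exact ⟨fun n => g^[n] x₀, rfl, fun n => by
    simpa only [Function.iterate_succ_apply'] using hg (g^[n] x₀)⟩

theorem StrictMono.finAppend {n n' : ℕ} {l : Fin n → ℕ} {l' : Fin n' → ℕ}
    (hl : StrictMono l) (hl' : StrictMono l') (h : ∀ i j, l i < l' j) :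
    StrictMono (Fin.append l l') := by
  intro i j hij
  induction i using Fin.addCases with
  | left i =>
    induction j using Fin.addCases with
    | left j =>
      rw [Fin.append_left, Fin.append_left]
      exact hl hij
    | right j =>
      rw [Fin.append_left, Fin.append_right]
      exact h i j
  | right i =>
    induction j using Fin.addCases with
    | left j =>
      refine absurd hij (not_lt.2 (Fin.le_def.2 ?_))
      simp only [Fin.val_natAdd, Fin.val_castAdd]
      omega
    | right j =>
      rw [Fin.append_right, Fin.append_right]
      exact hl' ((Fin.natAdd_lt_natAdd_iff n).1 hij)

namespace HJ

variable {α : Type*}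

section Substitution

theorem substV_append (u v : List (Option α)) (c : Option α) :
    substV (u ++ v) c = substV u c ++ substV v c :=
  List.map_append

theorem substV_flatten (L : List (List (Option α))) (c : Option α) :
    substV L.flatten c = (L.map (substV · c)).flatten := by
  simp [substV, List.map_flatten]

theorem substV_substV (w : List (Option α)) (b c : Option α) :
    substV (substV w b) c = substV w (b.elim c some) := by
  simp only [substV, List.map_map]
  congr 1
  funext d
  cases d <;> cases b <;> rfl

theorem map_some_substC (w : List (Option α)) (a : α) :
    (substC w a).map some = substV w (some a) := by
  simp only [substC, substV, List.map_map]
  congr 1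
  funext d
  cases d <;> rfl

theorem substV_none (w : List (Option α)) : substV w none = w := by
  have : (fun c : Option α => c.elim none some) = id := funext fun c => by cases c <;> rfl
  simp [substV, this]

theorem substV_of_none_notMem {u : List (Option α)} (hu : none ∉ u) (c : Option α) :
    substV u c = u := by
  conv_rhs => rw [← List.map_id u]
  refine List.map_congr_left fun d hd => ?_
  cases d
  exacts [absurd hd hu, rfl]

theorem none_notMem_substV_some (w : List (Option α)) (a : α) : none ∉ substV w (some a) := by
  simp only [substV, List.mem_map, not_exists, not_and]
  rintro (_ | _) _ <;> simp

end Substitution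

section Span

variable {S : Set α} {t : ℕ → List (Option α)} {I J : Set ℕ}

/-- Like `varSpan`, but without requiring an occurrence of the variable: constant words `z` of
the constant span appear here as `z.map some`. -/
def span (S : Set α) (t : ℕ → List (Option α)) (I : Set ℕ) : Set (List (Option α)) :=
  { w | ∃ (n : ℕ) (l : Fin (n + 1) → ℕ) (b : Fin (n + 1) → Option α),
      StrictMono l ∧ (∀ i, l i ∈ I) ∧ (∀ i, ∀ a : α, b i = some a → a ∈ S) ∧
      w = (List.ofFn fun i => substV (t (l i)) (b i)).flatten }

theorem span_mono (h : I ⊆ J) : span S t I ⊆ span S t J := by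
  rintro w ⟨n, l, b, hl, hlI, hb, rfl⟩
  exact ⟨n, l, b, hl, fun i => h (hlI i), hb, rfl⟩

theorem mem_varSpan_iff {w : List (Option α)} :
    w ∈ varSpan (fun _ => S) t I ↔ w ∈ span S t I ∧ none ∈ w := by
  constructor
  · rintro ⟨n, l, b, hl, hlI, hb, hw, rfl⟩
    exact ⟨⟨n, l, b, hl, hlI, hb, rfl⟩, hw⟩
  · rintro ⟨⟨n, l, b, hl, hlI, hb, rfl⟩, hw⟩
    exact ⟨n, l, b, hl, hlI, hb, hw, rfl⟩

theorem substV_mem_span {n : ℕ} (hn : n ∈ I) {c : Option α}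
    (hc : ∀ a, c = some a → a ∈ S) :
    substV (t n) c ∈ span S t I :=
  ⟨0, fun _ => n, fun _ => c, Subsingleton.strictMono (α := Fin 1) _, fun _ => hn, fun _ => hc,
    by simp⟩

theorem self_mem_span {n : ℕ} (hn : n ∈ I) : t n ∈ span S t I := by
  simpa only [substV_none] using substV_mem_span (S := S) hn (c := none) (by simp)

theorem substV_mem_span_of_mem {u : List (Option α)} (hu : u ∈ span S t I) {c : Option α}
    (hc : ∀ a, c = some a → a ∈ S) : substV u c ∈ span S t I := by
  obtain ⟨n, l, b, hl, hlI, hb, rfl⟩ := hu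
  refine ⟨n, l, fun i => (b i).elim c some, hl, hlI, fun i a ha => ?_, ?_⟩
  · dsimp only at ha
    rcases hbi : b i with _ | a'
    · rw [hbi] at ha
      exact hc a ha
    · rw [hbi, Option.elim_some, Option.some_inj] at ha
      exact ha ▸ hb i a' hbi
  · simp only [substV_flatten, List.map_ofFn, Function.comp_def, substV_substV]

theorem append_mem_span {u v : List (Option α)} (hu : u ∈ span S t I) (hv : v ∈ span S t J)
    (hIJ : ∀ i ∈ I, ∀ j ∈ J, i < j) : u ++ v ∈ span S t (I ∪ J) := by
  obtain ⟨n, l, b, hl, hlI, hb, rfl⟩ := hu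
  obtain ⟨n', l', b', hl', hlJ, hb', rfl⟩ := hv
  refine ⟨n + 1 + n', (Fin.append l l' : Fin (n + 1 + (n' + 1)) → ℕ),
    (Fin.append b b' : Fin (n + 1 + (n' + 1)) → Option α),
    hl.finAppend hl' fun i j => hIJ _ (hlI i) _ (hlJ j), fun i => ?_, fun i => ?_, ?_⟩
  · induction i using Fin.addCases (m := n + 1) (n := n' + 1) <;> simp [hlI, hlJ]
  · induction i using Fin.addCases (m := n + 1) (n := n' + 1)
    · simpa using hb _
    · simpa using hb' _
  · rw [← List.flatten_append, ← List.ofFn_fin_append]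
    congr 2
    funext i
    induction i using Fin.addCases <;> simp

theorem exists_mem_span_Ico {u : List (Option α)} {i : ℕ} (hu : u ∈ span S t (Set.Ici i)) :
    ∃ j, i < j ∧ u ∈ span S t (Set.Ico i j) := by
  obtain ⟨n, l, b, hl, hlI, hb, rfl⟩ := hu
  exact ⟨l (Fin.last n) + 1, Nat.lt_succ_of_le ((hlI 0).trans (hl.monotone (Fin.zero_le _))),
    n, l, b, hl, fun q => ⟨hlI q, Nat.lt_succ_of_le (hl.monotone (Fin.le_last q))⟩, hb, rfl⟩

theorem map_some_mem_span_iff (ht : ∀ n, none ∈ t n) {z : List α} :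
    z.map some ∈ span S t I ↔ z ∈ constSpan (fun _ => S) t I := by
  constructor
  · rintro ⟨n, l, b, hl, hlI, hb, hz⟩
    -- no `b i` is the variable, since it would survive in `z.map some`
    have hbs : ∀ i, ∃ a, b i = some a := by
      refine fun i => Option.ne_none_iff_exists'.1 fun hbi => ?_
      have : none ∈ z.map some := hz ▸ List.mem_flatten.2
        ⟨_, List.mem_ofFn.2 ⟨i, rfl⟩, by rw [hbi, substV_none]; exact ht _⟩
      simp at this
    choose a ha using hbs
    refine ⟨n, l, a, hl, hlI, fun i => hb i _ (ha i), ?_⟩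
    refine List.map_injective_iff.2 (Option.some_injective α) (hz.trans ?_)
    simp only [List.map_flatten, List.map_ofFn, Function.comp_def, map_some_substC, ha]
  · rintro ⟨n, l, a, hl, hlI, ha, rfl⟩
    refine ⟨n, l, fun i => some (a i), hl, hlI, fun i a' h => Option.some_inj.1 h ▸ ha i, ?_⟩
    simp only [List.map_flatten, List.map_ofFn, Function.comp_def, map_some_substC]

theorem append_mem_constSpan (ht : ∀ n, none ∈ t n) {z z' : List α}
    (hz : z ∈ constSpan (fun _ => S) t I) (hz' : z' ∈ constSpan (fun _ => S) t J)
    (hIJ : ∀ i ∈ I, ∀ j ∈ J, i < j) : z ++ z' ∈ constSpan (fun _ => S) t (I ∪ J) := by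
  rw [← map_some_mem_span_iff ht, List.map_append]
  exact append_mem_span ((map_some_mem_span_iff ht).2 hz) ((map_some_mem_span_iff ht).2 hz')
    hIJ

theorem substC_mem_constSpan (ht : ∀ n, none ∈ t n) {v : List (Option α)}
    (hv : v ∈ varSpan (fun _ => S) t I) {a : α} (ha : a ∈ S) :
    substC v a ∈ constSpan (fun _ => S) t I := by
  rw [← map_some_mem_span_iff ht, map_some_substC]
  exact substV_mem_span_of_mem (mem_varSpan_iff.1 hv).1 fun a' h => Option.some_inj.1 h ▸ ha

theorem substC_mem_constSpan_self {B : ℕ → Set α} {n : ℕ} (hn : n ∈ I) {a : α}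
    (ha : a ∈ B n) :
    substC (t n) a ∈ constSpan B t I :=
  ⟨0, fun _ => n, fun _ => a, Subsingleton.strictMono (α := Fin 1) _, fun _ => hn, fun _ => ha,
    by simp⟩

theorem varSpan_shift_subset (c : ℕ) (I : Set ℕ) :
    varSpan (fun _ => S) (fun i => t (c + i)) I ⊆ varSpan (fun _ => S) t (Set.Ici c) := by
  rintro v ⟨n, l, b, hl, -, hb, hv, rfl⟩
  exact ⟨n, (c + ·) ∘ l, b, fun i j h => Nat.add_lt_add_left (hl h) c,
    fun i => Nat.le_add_right c (l i), hb, hv, rfl⟩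

theorem none_mem_of_extracted {B : ℕ → Set α} {s w : ℕ → List (Option α)}
    (hw : Extracted B s w) (n : ℕ) : none ∈ w n := by
  obtain ⟨m, -, -, hm⟩ := hw n
  obtain ⟨_, _, _, -, -, -, h, -⟩ := hm n le_rfl
  exact h

theorem constSpan_mono {B : ℕ → Set α} (h : I ⊆ J) :
    constSpan B t I ⊆ constSpan B t J := by
  rintro z ⟨n, l, a, hl, hlI, ha, rfl⟩
  exact ⟨n, l, a, hl, fun i => h (hlI i), ha, rfl⟩

end Span

section Carlson

local instance : Semigroup (List (Option α)) where
  mul := (· ++ ·)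
  mul_assoc := List.append_assoc

variable (S : Set α) (s : ℕ → List (Option α))

def constTail (n : ℕ) : Set (List (Option α)) := {u | u ∈ span S s (Set.Ici n) ∧ none ∉ u}

def varTail (n : ℕ) : Set (List (Option α)) := {u | u ∈ span S s (Set.Ici n) ∧ none ∈ u}

def constUltrafilters : Set (Ultrafilter (List (Option α))) := {U | ∀ n, constTail S s n ∈ U}

def varUltrafilters : Set (Ultrafilter (List (Option α))) := {U | ∀ n, varTail S s n ∈ U}

def substFamily (U : Ultrafilter (List (Option α))) : S → Ultrafilter (List (Option α)) :=
  fun a => Ultrafilter.map (substV · (some a.1)) U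

variable {S s}

theorem exists_append_mem_span_Ici {n : ℕ} {u : List (Option α)}
    (hu : u ∈ span S s (Set.Ici n)) :
    ∃ j, ∀ v ∈ span S s (Set.Ici j), u ++ v ∈ span S s (Set.Ici n) := by
  obtain ⟨j, hnj, hu⟩ := exists_mem_span_Ico hu
  refine ⟨j, fun v hv => span_mono ?_ (append_mem_span hu hv fun i hi k hk => hi.2.trans_le hk)⟩
  exact Set.union_subset Set.Ico_subset_Ici_self (Set.Ici_subset_Ici.2 hnj.le)

theorem isClosed_constUltrafilters : IsClosed (constUltrafilters S s) :=
  Ultrafilter.isClosed_setOf_forall_mem _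

theorem isClosed_varUltrafilters : IsClosed (varUltrafilters S s) :=
  Ultrafilter.isClosed_setOf_forall_mem _

theorem constUltrafilters_nonempty (hS : S.Nonempty) : (constUltrafilters S s).Nonempty :=
  Ultrafilter.exists_forall_mem_of_antitone
    (fun _ _ h _ hu => ⟨span_mono (Set.Ici_subset_Ici.2 h) hu.1, hu.2⟩)
    fun n => hS.elim fun a ha => ⟨_, substV_mem_span (Set.mem_Ici.2 le_rfl)
      (fun _ h => Option.some_inj.1 h ▸ ha), none_notMem_substV_some (s n) a⟩

theorem varUltrafilters_nonempty (hs : ∀ n, none ∈ s n) : (varUltrafilters S s).Nonempty :=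
  Ultrafilter.exists_forall_mem_of_antitone
    (fun _ _ h _ hu => ⟨span_mono (Set.Ici_subset_Ici.2 h) hu.1, hu.2⟩)
    fun n => ⟨s n, self_mem_span (Set.mem_Ici.2 le_rfl), hs n⟩

variable {U V : Ultrafilter (List (Option α))}

theorem mul_mem_constUltrafilters (hU : U ∈ constUltrafilters S s)
    (hV : V ∈ constUltrafilters S s) : U * V ∈ constUltrafilters S s :=
  Ultrafilter.forall_mem_mul hU hV fun _ _ hu => (exists_append_mem_span_Ici hu.1).imp
    fun _ hj v hv => ⟨hj v hv.1, List.mem_append.not.2 (not_or.2 ⟨hu.2, hv.2⟩)⟩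

theorem mul_mem_varUltrafilters_left (hU : U ∈ varUltrafilters S s)
    (hV : ∀ n, span S s (Set.Ici n) ∈ V) : U * V ∈ varUltrafilters S s :=
  Ultrafilter.forall_mem_mul hU hV fun _ _ hu => (exists_append_mem_span_Ici hu.1).imp
    fun _ hj v hv => ⟨hj v hv, List.mem_append_left _ hu.2⟩

theorem mul_mem_varUltrafilters_right (hU : ∀ n, span S s (Set.Ici n) ∈ U)
    (hV : V ∈ varUltrafilters S s) : U * V ∈ varUltrafilters S s :=
  Ultrafilter.forall_mem_mul hU hV fun _ _ hu => (exists_append_mem_span_Ici hu).imp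
    fun _ hj v hv => ⟨hj v hv.1, List.mem_append_right _ hv.2⟩

theorem span_mem_of_mem_union (hU : U ∈ varUltrafilters S s ∪ constUltrafilters S s) (n : ℕ) :
    span S s (Set.Ici n) ∈ U := by
  rcases hU with hU | hU <;> exact Filter.mem_of_superset (hU n) fun _ h => h.1

theorem mul_mem_union (hU : U ∈ varUltrafilters S s ∪ constUltrafilters S s)
    (hV : V ∈ varUltrafilters S s ∪ constUltrafilters S s) :
    U * V ∈ varUltrafilters S s ∪ constUltrafilters S s := by
  rcases hU with hU | hU
  · exact Or.inl (mul_mem_varUltrafilters_left hU (span_mem_of_mem_union hV))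
  rcases hV with hV | hV
  · exact Or.inl (mul_mem_varUltrafilters_right (span_mem_of_mem_union (Or.inr hU)) hV)
  · exact Or.inr (mul_mem_constUltrafilters hU hV)

theorem continuous_substFamily : Continuous (substFamily (α := α) S) :=
  continuous_pi fun _ => Ultrafilter.continuous_map _

theorem substFamily_mul (U V : Ultrafilter (List (Option α))) :
    substFamily S (U * V) = substFamily S U * substFamily S V :=
  funext fun a => Ultrafilter.map_mul_of_map_mul (fun u v => substV_append u v (some a.1)) U V

theorem substFamily_of_mem_constUltrafilters (hU : U ∈ constUltrafilters S s) :
    substFamily S U = fun _ => U := by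
  refine funext fun a => Ultrafilter.coe_injective ?_
  rw [substFamily, Ultrafilter.coe_map, Filter.map_congr (m₂ := id)
    (Filter.mem_of_superset (hU 0) fun u hu => substV_of_none_notMem hu.2 _), Filter.map_id]

theorem substFamily_mem_constUltrafilters (hU : U ∈ varUltrafilters S s) (a : S) :
    substFamily S U a ∈ constUltrafilters S s := fun n =>
  Ultrafilter.mem_map.2 <| Filter.mem_of_superset (hU n) fun u (hu : u ∈ varTail S s n) =>
    show substV u (some a.1) ∈ constTail S s n from
      ⟨substV_mem_span_of_mem hu.1 fun _ h => Option.some_inj.1 h ▸ a.2,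
        none_notMem_substV_some u a⟩

theorem exists_idempotent_substFamily_eq (hS : S.Nonempty) (hs : ∀ n, none ∈ s n) :
    ∃ p : Ultrafilter (List (Option α)), IsIdempotentElem p ∧
      ∃ W ∈ varUltrafilters S s, substFamily S W = fun _ => p := by
  have hcont (r : Ultrafilter (List (Option α))) : Continuous (· * r) :=
    Ultrafilter.continuous_mul_left r
  have hcont' (r : S → Ultrafilter (List (Option α))) : Continuous (· * r) :=
    continuous_pi fun a => (hcont (r a)).comp (continuous_apply a)
  obtain ⟨p, hpC, hpp, hpmin⟩ := exists_minimal_idempotent hcont (constUltrafilters_nonempty hS)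
    isClosed_constUltrafilters fun _ hx _ hy => mul_mem_constUltrafilters hx hy
  have hp : substFamily S p = fun _ => p := substFamily_of_mem_constUltrafilters hpC
  obtain ⟨_, ⟨W, hW, rfl⟩, hWW, hWp, hpW⟩ := exists_idempotent_mem_ideal hcont'
    ((isClosed_varUltrafilters.union isClosed_constUltrafilters).isCompact.image
      continuous_substFamily).isClosed
    (by
      rintro _ ⟨U, hU, rfl⟩ _ ⟨V, hV, rfl⟩
      exact ⟨U * V, mul_mem_union hU hV, substFamily_mul U V⟩)
    ((varUltrafilters_nonempty hs).image _)
    (isClosed_varUltrafilters.isCompact.image continuous_substFamily).isClosed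
    (Set.image_mono Set.subset_union_left)
    (by
      rintro _ ⟨U, hU, rfl⟩ _ ⟨V, hV, rfl⟩
      exact ⟨U * V, mul_mem_varUltrafilters_right (span_mem_of_mem_union hU) hV,
        substFamily_mul U V⟩)
    (by
      rintro _ ⟨U, hU, rfl⟩ _ ⟨V, hV, rfl⟩
      exact ⟨V * U, mul_mem_varUltrafilters_left hV (span_mem_of_mem_union hU),
        substFamily_mul V U⟩)
    ⟨p, Or.inr hpC, hp⟩ (by rw [IsIdempotentElem, ← hp, ← substFamily_mul, hpp.eq])
  refine ⟨p, hpp, W, hW, funext fun a => hpmin _ (substFamily_mem_constUltrafilters hW a)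
    (congrFun hWW a) ?_ ?_⟩
  · simpa [hp] using congrFun hWp a
  · simpa [hp] using congrFun hpW a

variable {p W : Ultrafilter (List (Option α))}

theorem exists_galvinGlazer_step (hS : S.Finite) (hp : IsIdempotentElem p)
    (hW : W ∈ varUltrafilters S s) (hWp : substFamily S W = fun _ => p)
    {D : Set (List (Option α))} (hD : D ∈ p) (m : ℕ) :
    ∃ v j, m < j ∧ v ∈ span S s (Set.Ico m j) ∧ none ∈ v ∧
      ∀ a ∈ S, substV v (some a) ∈ D ∧ {u | substV v (some a) ++ u ∈ D} ∈ p := by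
  have hD' : {x | {u | x ++ u ∈ D} ∈ p} ∈ p := Ultrafilter.mem_mul_iff.1 (hp.eq.symm ▸ hD)
  have hgood :
      ⋂ a ∈ S, (substV · (some a)) ⁻¹' (D ∩ {x | {u | x ++ u ∈ D} ∈ p}) ∈ W := by
    refine (Filter.biInter_mem hS).2 fun a ha => ?_
    change _ ∈ substFamily S W ⟨a, ha⟩
    rw [hWp]
    exact Filter.inter_mem hD hD'
  obtain ⟨v, hv, hvspan, hvnone⟩ := Ultrafilter.nonempty_of_mem (Filter.inter_mem hgood (hW m))
  obtain ⟨j, hmj, hvj⟩ := exists_mem_span_Ico hvspan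
  exact ⟨v, j, hmj, hvj, hvnone, fun a ha => Set.mem_iInter₂.1 hv a ha⟩

theorem map_some_mem_of_galvinGlazer {w : ℕ → List (Option α)}
    {D : ℕ → Set (List (Option α))} (hD : Antitone D)
    (hw : ∀ n, ∀ a ∈ S, substV (w n) (some a) ∈ D n ∧
      ∀ u ∈ D (n + 1), substV (w n) (some a) ++ u ∈ D n)
    (k : ℕ) (l : Fin (k + 1) → ℕ) (a : Fin (k + 1) → α) (hl : StrictMono l)
    (ha : ∀ i, a i ∈ S) :
    ((List.ofFn fun i => substC (w (l i)) (a i)).flatten).map some ∈ D (l 0) := by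
  induction k with
  | zero => simpa [map_some_substC] using (hw (l 0) (a 0) (ha 0)).1
  | succ k ih =>
    rw [List.ofFn_succ, List.flatten_cons, List.map_append, map_some_substC]
    exact (hw (l 0) (a 0) (ha 0)).2 _ (hD (Nat.succ_le_of_lt (hl (Fin.succ_pos 0)))
      (ih _ _ (hl.comp Fin.strictMono_succ) fun i => ha _))

theorem exists_extracted_map_some_mem (hS : S.Finite) (hp : IsIdempotentElem p)
    (hW : W ∈ varUltrafilters S s) (hWp : substFamily S W = fun _ => p)
    {D₀ : Set (List (Option α))} (hD₀ : D₀ ∈ p) :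
    ∃ w, Extracted (fun _ => S) s w ∧
      ∀ z ∈ constSpan (fun _ => S) w Set.univ, z.map some ∈ D₀ := by
  -- Recursively choose `w n` from the block `[m n, m (n + 1))` together with `D (n + 1) ∈ p`.
  let R (x y : {x : Set (List (Option α)) × ℕ // x.1 ∈ p}) : Prop :=
    y.1.1 ⊆ x.1.1 ∧ ∃ v, x.1.2 < y.1.2 ∧ v ∈ span S s (Set.Ico x.1.2 y.1.2) ∧
      none ∈ v ∧
      ∀ a ∈ S, substV v (some a) ∈ x.1.1 ∧ ∀ u ∈ y.1.1, substV v (some a) ++ u ∈ x.1.1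
  obtain ⟨f, hf0, hf⟩ := exists_seq_of_forall_exists (R := R) (fun x => by
    obtain ⟨v, j, hj, hv, hvn, hvD⟩ := exists_galvinGlazer_step hS hp hW hWp x.2 x.1.2
    exact ⟨⟨(x.1.1 ∩ ⋂ a ∈ S, {u | substV v (some a) ++ u ∈ x.1.1}, j),
      Filter.inter_mem x.2 ((Filter.biInter_mem hS).2 fun a ha => (hvD a ha).2)⟩,
      Set.inter_subset_left, v, hj, hv, hvn,
      fun a ha => ⟨(hvD a ha).1, fun u hu => Set.mem_iInter₂.1 hu.2 a ha⟩⟩)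
    ⟨(D₀, 0), hD₀⟩
  choose w hw using fun n => (hf n).2
  have hD : Antitone fun n => (f n).1.1 := antitone_nat_of_succ_le fun n => (hf n).1
  refine ⟨w, fun _ => ⟨fun n => (f n).1.2, by simp only [hf0], strictMono_nat_of_lt_succ
    fun n => (hw n).1, fun n _ => mem_varSpan_iff.2 ⟨(hw n).2.1, (hw n).2.2.1⟩⟩, ?_⟩
  rintro _ ⟨k, l, a, hl, -, ha, rfl⟩
  simpa [hf0] using hD (Nat.zero_le _)
    (map_some_mem_of_galvinGlazer hD (fun n => (hw n).2.2.2) k l a hl ha)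

theorem exists_extracted_constSpan_subset (hS : S.Finite) (hSne : S.Nonempty)
    (hs : ∀ n, none ∈ s n) {E : Set (List α)} (hE : IsLarge (fun _ => S) E s) :
    ∃ w, Extracted (fun _ => S) s w ∧ constSpan (fun _ => S) w Set.univ ⊆ E := by
  obtain ⟨p, hp, W, hW, hWp⟩ := exists_idempotent_substFamily_eq hSne hs
  rcases Ultrafilter.mem_or_compl_mem p (List.map some '' E) with hEp | hEp
  · obtain ⟨w, hw, hwE⟩ := exists_extracted_map_some_mem hS hp hW hWp hEp
    exact ⟨w, hw, fun z hz =>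
      (List.map_injective_iff.2 (Option.some_injective α)).mem_set_image.1 (hwE z hz)⟩
  · obtain ⟨w, hw, hwE⟩ := exists_extracted_map_some_mem hS hp hW hWp hEp
    obtain ⟨z, hzE, hz⟩ := hE w hw
    exact absurd (Set.mem_image_of_mem _ hzE) (hwE z hz)

end Carlson

end HJ

open HJ in
/-- Lemma 2.11. -/
theorem stmt8 {α : Type*} (A : Finset α) (hA : A.Nonempty)
    (E : Set (List α)) (hE : E ⊆ WordsOver (A : Set α))
    (s : ℕ → List (Option α)) (hs : ∀ n, IsVarWord (A : Set α) (s n))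
    (hlarge : IsLarge (fun _ => (A : Set α)) E s) :
    ∃ w : ℕ → List (Option α),
      Extracted (fun _ => (A : Set α)) s w ∧
      ∀ n : ℕ,
        IsLarge (fun _ => (A : Set α))
          (E ∩ wordQuot (A : Set α) E
            (constSpan (fun _ => (A : Set α)) w (Set.Iic n)))
          (fun i => w (n + 1 + i)) := by
  obtain ⟨w, hw, hwE⟩ :=
    exists_extracted_constSpan_subset A.finite_toSet hA (fun n => (hs n).2) hlarge
  have ht := none_mem_of_extracted hw
  obtain ⟨a, ha⟩ := hA
  refine ⟨w, hw, fun n u hu => ?_⟩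
  obtain ⟨m, -, -, hm⟩ := hu 0
  have hz : substC (u 0) a ∈ constSpan (fun _ => (A : Set α)) w (Set.Ici (n + 1)) :=
    substC_mem_constSpan ht (varSpan_shift_subset _ _ (hm 0 le_rfl)) ha
  have hzE : substC (u 0) a ∈ E := hwE (constSpan_mono (Set.subset_univ _) hz)
  have hFz : ∀ f ∈ constSpan (fun _ => (A : Set α)) w (Set.Iic n), f ++ substC (u 0) a ∈ E :=
    fun f hf => hwE (constSpan_mono (Set.subset_univ _)
      (append_mem_constSpan ht hf hz fun _ hi _ hj => Nat.lt_of_le_of_lt hi hj))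
  exact ⟨_, ⟨hzE, hE hzE, hFz⟩, substC_mem_constSpan_self (Set.mem_univ 0) ha⟩
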